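/- Let H be a complex separable infinite-dimensional Hilbert space and let E ⊆ c₀ be a Banach symmetric sequence space with the Fatou property. Then every closed norm ball of the Banach symmetric ideal C_E is closed in the weak topology σ(C_E, C_E^×); consequently the ball topology b_{C_E} is coarser than σ(C_E, C_E^×). -/

import Mathlib

open scoped InnerProductSpace
open Filter Topology

noncomputable section

/-- The non-increasing rearrangement `x*` of a bounded real sequence:
`x*_n = inf_{|F| ≤ n} sup_{k ∉ F} |x k|`. -/
noncomputable def decRearrange (x : ℕ → ℝ) (n : ℕ) : ℝ :=
  sInf {c : ℝ | ∃ F : Finset ℕ, F.card ≤ n ∧ ∀ k ∉ F, |x k| ≤ c}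

/-- A Banach symmetric sequence space: a nonzero linear subspace of `ℓ∞` (real bounded
sequences) equipped with a complete norm such that `x* ≤ y*` pointwise and `y ∈ E` imply
`x ∈ E` with `‖x‖_E ≤ ‖y‖_E`. -/
structure BanachSymmSeqSpace where
  carrier : Set (ℕ → ℝ)
  bdd : ∀ x ∈ carrier, ∃ C : ℝ, ∀ n, |x n| ≤ C
  zero_mem : (0 : ℕ → ℝ) ∈ carrier
  add_mem : ∀ x ∈ carrier, ∀ y ∈ carrier, x + y ∈ carrier
  smul_mem : ∀ (c : ℝ), ∀ x ∈ carrier, c • x ∈ carrier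
  nontrivial : ∃ x ∈ carrier, x ≠ 0
  nrm : (ℕ → ℝ) → ℝ
  nrm_zero : nrm 0 = 0
  nrm_pos : ∀ x ∈ carrier, x ≠ 0 → 0 < nrm x
  nrm_smul : ∀ (c : ℝ), ∀ x ∈ carrier, nrm (c • x) = |c| * nrm x
  nrm_triangle : ∀ x ∈ carrier, ∀ y ∈ carrier, nrm (x + y) ≤ nrm x + nrm y
  complete : ∀ u : ℕ → ℕ → ℝ, (∀ n, u n ∈ carrier) →
    (∀ ε : ℝ, 0 < ε → ∃ N, ∀ m ≥ N, ∀ k ≥ N, nrm (u m - u k) < ε) →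
    ∃ x ∈ carrier, ∀ ε : ℝ, 0 < ε → ∃ N, ∀ m ≥ N, nrm (u m - x) < ε
  symmetric : ∀ x : ℕ → ℝ, ∀ y ∈ carrier, (∃ C : ℝ, ∀ n, |x n| ≤ C) →
    (∀ n, decRearrange x n ≤ decRearrange y n) → x ∈ carrier ∧ nrm x ≤ nrm y

/-- `E ⊆ c₀`: every element of `E` tends to zero. -/
def BanachSymmSeqSpace.SubsetC0 (S : BanachSymmSeqSpace) : Prop :=
  ∀ x ∈ S.carrier, Filter.Tendsto x Filter.atTop (nhds 0)

/-- The Fatou property of a Banach symmetric sequence space. -/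
def BanachSymmSeqSpace.Fatou (S : BanachSymmSeqSpace) : Prop :=
  ∀ a : ℕ → ℕ → ℝ, (∀ k, a k ∈ S.carrier) → (∀ k n, 0 ≤ a k n) →
    (∀ k n, a k n ≤ a (k + 1) n) → (∃ C : ℝ, ∀ k, S.nrm (a k) ≤ C) →
    ∃ b ∈ S.carrier, (∀ n, IsLUB {r : ℝ | ∃ k, r = a k n} (b n)) ∧
      IsLUB {r : ℝ | ∃ k, r = S.nrm (a k)} (S.nrm b)

/-- `E = ℓ₂` as a set of sequences. -/
def ellTwo : Set (ℕ → ℝ) := {x : ℕ → ℝ | Summable fun n => (x n) ^ 2}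

section OperatorIdeal

variable {H : Type*} [NormedAddCommGroup H] [InnerProductSpace ℂ H] [CompleteSpace H]

/-- The `n`-th singular value (approximation number) of an operator:
`s_n(x) = inf { ‖x - F‖ : rank F ≤ n }` (so `s_0(x) = ‖x‖`). For compact operators this is
the `n`-th eigenvalue (in decreasing order) of `(x*x)^{1/2}`. -/
noncomputable def singVal (x : H →L[ℂ] H) (n : ℕ) : ℝ :=
  sInf {c : ℝ | ∃ F : H →L[ℂ] H, FiniteDimensional ℂ (LinearMap.range (F : H →ₗ[ℂ] H)) ∧
    Module.finrank ℂ (LinearMap.range (F : H →ₗ[ℂ] H)) ≤ n ∧ ‖x - F‖ = c}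

/-- The Banach symmetric ideal `C_E` of compact operators whose singular value sequence
belongs to `E`. -/
def CE (S : BanachSymmSeqSpace) : Set (H →L[ℂ] H) :=
  {x | IsCompactOperator (⇑x) ∧ (fun n => singVal x n) ∈ S.carrier}

/-- The norm `‖x‖_{C_E} = ‖{s_n(x)}‖_E` of the Banach symmetric ideal `C_E`. -/
noncomputable def CEnorm (S : BanachSymmSeqSpace) (x : H →L[ℂ] H) : ℝ :=
  S.nrm (fun n => singVal x n)

/-- A trace class operator: a compact operator with summable singular values. -/
def IsTraceClass (z : H →L[ℂ] H) : Prop :=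
  IsCompactOperator (⇑z) ∧ Summable fun n => singVal z n

/-- The Köthe dual `C_E^× = { y ∈ B(H) : x y is trace class for every x ∈ C_E }`. -/
def KDual (S : BanachSymmSeqSpace) : Set (H →L[ℂ] H) :=
  {y : H →L[ℂ] H | ∀ x ∈ CE (H := H) S, IsTraceClass (x * y)}

/-- The trace of an operator computed with respect to a Hilbert basis `b`:
`tr z = Σ_i ⟪b i, z (b i)⟫` (basis independent for trace class operators). -/
noncomputable def traceB (b : HilbertBasis ℕ ℂ H) (z : H →L[ℂ] H) : ℂ :=
  ∑' i, ⟪b i, z (b i)⟫_ℂ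

/-- The weak topology `σ(C_E, C_E^×)` on `C_E`, generated by the functionals
`x ↦ tr (x y)`, `y ∈ C_E^×`. -/
noncomputable def sigmaTop (S : BanachSymmSeqSpace) (b : HilbertBasis ℕ ℂ H) :
    TopologicalSpace {x : H →L[ℂ] H // x ∈ CE (H := H) S} :=
  ⨅ y : {y : H →L[ℂ] H // y ∈ KDual (H := H) S},
    TopologicalSpace.induced (fun x => traceB b (x.1 * y.1)) inferInstance

/-- The ball topology `b_{C_E}`: the coarsest topology in which every closed norm ball
of `(C_E, ‖·‖_{C_E})` is closed. -/
noncomputable def ballTop (S : BanachSymmSeqSpace) :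
    TopologicalSpace {x : H →L[ℂ] H // x ∈ CE (H := H) S} :=
  TopologicalSpace.generateFrom
    {s | ∃ (c : {x : H →L[ℂ] H // x ∈ CE (H := H) S}) (ε : ℝ), 0 < ε ∧
      s = {y : {x : H →L[ℂ] H // x ∈ CE (H := H) S} | CEnorm S (y.1 - c.1) ≤ ε}ᶜ}

/-- `W` is a surjective (complex-)linear isometry of the Banach symmetric ideal `C_E`. -/
def SurjLinearIsomOn (S : BanachSymmSeqSpace) (W : (H →L[ℂ] H) → (H →L[ℂ] H)) : Prop :=
  (∀ x ∈ CE (H := H) S, W x ∈ CE (H := H) S) ∧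
  (∀ y ∈ CE (H := H) S, ∃ x ∈ CE (H := H) S, W x = y) ∧
  (∀ x ∈ CE (H := H) S, ∀ y ∈ CE (H := H) S, W (x + y) = W x + W y) ∧
  (∀ (c : ℂ), ∀ x ∈ CE (H := H) S, W (c • x) = c • W x) ∧
  (∀ x ∈ CE (H := H) S, CEnorm S (W x) = CEnorm S x)

end OperatorIdeal

end

/-!
Let `x` lie in the `σ(C_E, C_E^×)`-closure of the ball `‖y - c‖_{C_E} ≤ ε` and put `z = x - c`.
The rank-one operators `u ⊗ v` lie in `C_E^×` and `tr (y (u ⊗ v)) = ⟪v, y u⟫`, so the compression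
`y ↦ P y P` onto the span of finitely many basis vectors is σ-continuous. As `z` is compact,
`P z P` is norm-close to `z` for a large such `P`, which yields, for every `δ > 0`, an operator `y`
in the ball with `s_n(z) ≤ s_n(y - c) + δ` for all `n`. This bounds the `E`-norm of every finite
truncation of `s(z)` by `ε`, and the Fatou property passes the bound to `s(z)`. The ball topology
is generated by the complements of closed balls, so it is coarser than `σ(C_E, C_E^×)`.
-/

lemma bddBelow_decRearrange_set (x : ℕ → ℝ) (n : ℕ) :
    BddBelow {c : ℝ | ∃ F : Finset ℕ, F.card ≤ n ∧ ∀ k ∉ F, |x k| ≤ c} := by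
  refine ⟨0, ?_⟩
  rintro c ⟨F, -, hF⟩
  obtain ⟨k, hk⟩ := F.exists_notMem
  exact (abs_nonneg _).trans (hF k hk)

lemma decRearrange_le {x : ℕ → ℝ} {n : ℕ} {c : ℝ} {F : Finset ℕ} (hF : F.card ≤ n)
    (hc : ∀ k ∉ F, |x k| ≤ c) : decRearrange x n ≤ c :=
  csInf_le (bddBelow_decRearrange_set x n) ⟨F, hF, hc⟩

lemma le_decRearrange {x : ℕ → ℝ} {n : ℕ} {c : ℝ} (hx : ∃ C, ∀ k, |x k| ≤ C)
    (h : ∀ F : Finset ℕ, F.card ≤ n → ∀ d, (∀ k ∉ F, |x k| ≤ d) → c ≤ d) :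
    c ≤ decRearrange x n := by
  obtain ⟨C, hC⟩ := hx
  exact le_csInf ⟨C, ∅, by simp, fun k _ => hC k⟩ fun d ⟨F, hF, hd⟩ => h F hF d hd

lemma decRearrange_nonneg {x : ℕ → ℝ} (hx : ∃ C, ∀ k, |x k| ≤ C) (n : ℕ) :
    0 ≤ decRearrange x n :=
  le_decRearrange hx fun F _ _ hd =>
    let ⟨k, hk⟩ := F.exists_notMem
    (abs_nonneg _).trans (hd k hk)

lemma abs_le_decRearrange_zero {x : ℕ → ℝ} (hx : ∃ C, ∀ k, |x k| ≤ C) (k : ℕ) :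
    |x k| ≤ decRearrange x 0 :=
  le_decRearrange hx fun F hF _ hd => hd k (by simp [Finset.card_eq_zero.mp (Nat.le_zero.mp hF)])

lemma exists_abs_le_of_antitone {x : ℕ → ℝ} (hx0 : 0 ≤ x) (hx : Antitone x) :
    ∃ C, ∀ k, |x k| ≤ C :=
  ⟨x 0, fun k => (abs_of_nonneg (hx0 k)).trans_le (hx (Nat.zero_le k))⟩

lemma Antitone.decRearrange_eq {x : ℕ → ℝ} (hx : Antitone x) (hx0 : 0 ≤ x) :
    decRearrange x = x := by
  funext n
  refine le_antisymm (decRearrange_le (F := Finset.range n) (by simp) fun k hk => ?_) ?_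
  · rw [abs_of_nonneg (hx0 k)]
    exact hx (by simpa using hk)
  · refine le_decRearrange (exists_abs_le_of_antitone hx0 hx) fun F hF d hd => ?_
    obtain ⟨k, hk, hkF⟩ :=
      Finset.exists_mem_notMem_of_card_lt_card (s := F) (t := Finset.range (n + 1)) (by simp; omega)
    exact (hx (Nat.lt_succ_iff.mp (Finset.mem_range.mp hk))).trans
      ((le_abs_self _).trans (hd k hkF))

lemma antitone_indicator_Iio {x : ℕ → ℝ} (hx : Antitone x) (hx0 : 0 ≤ x) (k : ℕ) :
    Antitone ((Set.Iio k).indicator x) := by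
  intro i j hij
  simp only [Set.indicator_apply, Set.mem_Iio]
  split_ifs with hj hi
  · exact hx hij
  · omega
  · exact hx0 i
  · rfl

namespace BanachSymmSeqSpace

variable (S : BanachSymmSeqSpace)

lemma nrm_nonneg {x : ℕ → ℝ} (hx : x ∈ S.carrier) : 0 ≤ S.nrm x := by
  rcases eq_or_ne x 0 with rfl | h
  · rw [S.nrm_zero]
  · exact (S.nrm_pos x hx h).le

lemma mem_and_nrm_le_of_le {x y : ℕ → ℝ} (hy : y ∈ S.carrier) (hx : Antitone x) (hx0 : 0 ≤ x)
    (hy' : Antitone y) (hy0 : 0 ≤ y) (hxy : x ≤ y) : x ∈ S.carrier ∧ S.nrm x ≤ S.nrm y :=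
  S.symmetric x y hy (exists_abs_le_of_antitone hx0 hx) fun n => by
    rw [hx.decRearrange_eq hx0, hy'.decRearrange_eq hy0]
    exact hxy n

lemma single_mem (j : ℕ) : Pi.single j (1 : ℝ) ∈ S.carrier := by
  obtain ⟨x₀, hx₀, hne⟩ := S.nontrivial
  obtain ⟨j₀, hj₀ : x₀ j₀ ≠ 0⟩ := Function.ne_iff.mp hne
  have hx₁ : (x₀ j₀)⁻¹ • x₀ ∈ S.carrier := S.smul_mem _ _ hx₀
  have hsingle : ∀ k, |(Pi.single j 1 : ℕ → ℝ) k| ≤ 1 := fun k => by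
    by_cases h : k = j <;> simp [h]
  refine (S.symmetric _ _ hx₁ ⟨1, hsingle⟩ fun n => ?_).1
  cases n with
  | zero =>
    calc decRearrange (Pi.single j 1) 0 ≤ 1 :=
          decRearrange_le (F := ∅) (by simp) fun k _ => hsingle k
      _ = |((x₀ j₀)⁻¹ • x₀) j₀| := by simp [abs_ne_zero.mpr hj₀]
      _ ≤ _ := abs_le_decRearrange_zero (S.bdd _ hx₁) j₀
  | succ n =>
    refine (decRearrange_le (F := {j}) (by simp) fun k hk => ?_).trans
      (decRearrange_nonneg (S.bdd _ hx₁) _)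
    simp [Finset.mem_singleton.not.mp hk]

lemma indicator_Iio_const_mem (c : ℝ) (k : ℕ) :
    (Set.Iio k).indicator (fun _ => c) ∈ S.carrier := by
  have h1 : (Set.Iio k).indicator (fun _ => (1 : ℝ)) ∈ S.carrier := by
    induction k with
    | zero =>
      convert S.zero_mem using 1
      funext n
      simp
    | succ k ih =>
      convert S.add_mem _ ih _ (S.single_mem k) using 1
      funext n
      simp only [Set.indicator_apply, Set.mem_Iio, Pi.add_apply, Pi.single_apply]
      split_ifs <;> first | omega | norm_num
  convert S.smul_mem c _ h1 using 1
  funext n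
  simp [Set.indicator_apply]

lemma nrm_indicator_Iio_const (c : ℝ) (k : ℕ) :
    S.nrm ((Set.Iio k).indicator fun _ => c) =
      |c| * S.nrm ((Set.Iio k).indicator fun _ => 1) := by
  rw [← S.nrm_smul c _ (S.indicator_Iio_const_mem 1 k)]
  congr 1
  funext n
  simp [Set.indicator_apply]

lemma extend_mem {e : ℕ → ℕ} (he : e.Injective) {y : ℕ → ℝ} (hy : y ∈ S.carrier)
    (hy' : Antitone y) (hy0 : 0 ≤ y) : Function.extend e y 0 ∈ S.carrier := by
  refine (S.symmetric _ y hy ⟨y 0, fun k => ?_⟩ fun n => ?_).1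
  · by_cases hk : ∃ i, e i = k
    · obtain ⟨i, rfl⟩ := hk
      rw [he.extend_apply, abs_of_nonneg (hy0 i)]
      exact hy' (Nat.zero_le i)
    · rw [Function.extend_apply' _ _ _ hk]
      simpa using hy0 0
  · rw [hy'.decRearrange_eq hy0]
    refine decRearrange_le (F := (Finset.range n).image e)
      (Finset.card_image_le.trans (by simp)) fun k hk => ?_
    by_cases hk' : ∃ i, e i = k
    · obtain ⟨i, rfl⟩ := hk'
      have hni : n ≤ i := by
        by_contra h
        exact hk (Finset.mem_image_of_mem e (Finset.mem_range.mpr (by omega)))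
      rw [he.extend_apply, abs_of_nonneg (hy0 i)]
      exact hy' hni
    · rw [Function.extend_apply' _ _ _ hk']
      simpa using hy0 n

lemma comp_div_two_mem {y : ℕ → ℝ} (hy : y ∈ S.carrier) (hy' : Antitone y) (hy0 : 0 ≤ y) :
    (fun n => y (n / 2)) ∈ S.carrier := by
  have heven : (fun i => 2 * i).Injective := fun a b h => by simp only at h; omega
  have hodd : (fun i => 2 * i + 1).Injective := fun a b h => by simp only at h; omega
  convert S.add_mem _ (S.extend_mem heven hy hy' hy0) _ (S.extend_mem hodd hy hy' hy0) using 1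
  funext n
  obtain ⟨i, rfl | rfl⟩ := Nat.even_or_odd' n
  · rw [Pi.add_apply, heven.extend_apply, Function.extend_apply' _ _ _ (by omega)]
    simp
  · rw [Pi.add_apply, hodd.extend_apply, Function.extend_apply' _ _ _ (by omega)]
    simp [show (2 * i + 1) / 2 = i by omega]

lemma indicator_Iio_mem {x : ℕ → ℝ} (hx : Antitone x) (hx0 : 0 ≤ x) (k : ℕ) :
    (Set.Iio k).indicator x ∈ S.carrier :=
  (S.mem_and_nrm_le_of_le (S.indicator_Iio_const_mem (x 0) k) (antitone_indicator_Iio hx hx0 k)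
    (Set.indicator_nonneg fun n _ => hx0 n)
    (antitone_indicator_Iio antitone_const (fun _ => hx0 0) k)
    (Set.indicator_nonneg fun _ _ => hx0 0)
    fun n => Set.indicator_le_indicator (hx (Nat.zero_le n))).1

lemma nrm_indicator_Iio_le_of_forall_le_add {x : ℕ → ℝ} {ε : ℝ} (hx : Antitone x) (hx0 : 0 ≤ x)
    (happrox : ∀ δ > 0, ∃ y ∈ S.carrier, Antitone y ∧ 0 ≤ y ∧ S.nrm y ≤ ε ∧ ∀ n, x n ≤ y n + δ)
    (k : ℕ) : S.nrm ((Set.Iio k).indicator x) ≤ ε := by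
  set C := S.nrm ((Set.Iio k).indicator fun _ => 1)
  have hC : 0 ≤ C := S.nrm_nonneg (S.indicator_Iio_const_mem 1 k)
  refine le_of_forall_pos_le_add fun δ' hδ' => ?_
  obtain ⟨y, hy, hy', hy0, hyε, hxy⟩ := happrox (δ' / (C + 1)) (by positivity)
  set χ := (Set.Iio k).indicator fun _ => δ' / (C + 1)
  have hχ : χ ∈ S.carrier := S.indicator_Iio_const_mem _ k
  have hχ0 : 0 ≤ χ := Set.indicator_nonneg fun _ _ => by positivity
  have hle : (Set.Iio k).indicator x ≤ y + χ := fun n => by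
    by_cases hn : n < k
    · simpa [χ, hn] using hxy n
    · simpa [χ, hn] using hy0 n
  calc S.nrm ((Set.Iio k).indicator x)
      ≤ S.nrm (y + χ) :=
        (S.mem_and_nrm_le_of_le (S.add_mem _ hy _ hχ) (antitone_indicator_Iio hx hx0 k)
          (Set.indicator_nonneg fun n _ => hx0 n)
          (hy'.add (antitone_indicator_Iio antitone_const (fun _ => by positivity) k))
          (add_nonneg hy0 hχ0) hle).2
    _ ≤ S.nrm y + S.nrm χ := S.nrm_triangle _ hy _ hχ
    _ = S.nrm y + δ' / (C + 1) * C := by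
        rw [S.nrm_indicator_Iio_const, abs_of_pos (by positivity)]
    _ ≤ ε + δ' := by
        gcongr
        rw [div_mul_eq_mul_div, div_le_iff₀ (by positivity)]
        nlinarith

lemma nrm_le_of_forall_le_add (hF : S.Fatou) {x : ℕ → ℝ} {ε : ℝ} (hx : Antitone x) (hx0 : 0 ≤ x)
    (happrox : ∀ δ > 0, ∃ y ∈ S.carrier, Antitone y ∧ 0 ≤ y ∧ S.nrm y ≤ ε ∧ ∀ n, x n ≤ y n + δ) :
    S.nrm x ≤ ε := by
  have htrunc := S.nrm_indicator_Iio_le_of_forall_le_add hx hx0 happrox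
  obtain ⟨b, -, hb, hbnrm⟩ := hF (fun k => (Set.Iio k).indicator x) (S.indicator_Iio_mem hx hx0)
    (fun k => Set.indicator_nonneg fun n _ => hx0 n)
    (fun k => Set.indicator_le_indicator_of_subset (Set.Iio_subset_Iio k.le_succ) fun n => hx0 n)
    ⟨ε, htrunc⟩
  obtain rfl : b = x := funext fun n => (hb n).unique ⟨by
    rintro _ ⟨k, rfl⟩
    exact Set.indicator_le_self' (fun n _ => hx0 n) n, fun u hu => by simpa using hu ⟨n + 1, rfl⟩⟩
  exact hbnrm.2 (by rintro _ ⟨k, rfl⟩; exact htrunc k)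

end BanachSymmSeqSpace

section SingularValues

variable {H : Type*} [NormedAddCommGroup H] [InnerProductSpace ℂ H]

lemma singVal_le {x : H →L[ℂ] H} {n : ℕ} (F : H →L[ℂ] H)
    (hF : FiniteDimensional ℂ (LinearMap.range (F : H →ₗ[ℂ] H)))
    (hrk : Module.finrank ℂ (LinearMap.range (F : H →ₗ[ℂ] H)) ≤ n) : singVal x n ≤ ‖x - F‖ :=
  csInf_le ⟨0, by rintro _ ⟨G, -, -, rfl⟩; exact norm_nonneg _⟩ ⟨F, hF, hrk, rfl⟩

lemma le_singVal {x : H →L[ℂ] H} {n : ℕ} {c : ℝ}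
    (h : ∀ F : H →L[ℂ] H, FiniteDimensional ℂ (LinearMap.range (F : H →ₗ[ℂ] H)) →
      Module.finrank ℂ (LinearMap.range (F : H →ₗ[ℂ] H)) ≤ n → c ≤ ‖x - F‖) :
    c ≤ singVal x n := by
  have hrange : LinearMap.range ((0 : H →L[ℂ] H) : H →ₗ[ℂ] H) = ⊥ := by
    simp
  refine le_csInf ⟨‖x - 0‖, 0, ?_, ?_, rfl⟩ fun _ ⟨F, hF, hrk, hc⟩ => hc ▸ h F hF hrk
  · rw [hrange]
    infer_instance
  · rw [hrange, finrank_bot]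
    exact n.zero_le

lemma singVal_le_of_range_le {x : H →L[ℂ] H} {n : ℕ} (F : H →L[ℂ] H) (U : Submodule ℂ H)
    [FiniteDimensional ℂ U] (hU : Module.finrank ℂ U ≤ n)
    (hF : LinearMap.range (F : H →ₗ[ℂ] H) ≤ U) : singVal x n ≤ ‖x - F‖ :=
  singVal_le F (Submodule.finiteDimensional_of_le hF) ((Submodule.finrank_mono hF).trans hU)

lemma singVal_nonneg (x : H →L[ℂ] H) (n : ℕ) : 0 ≤ singVal x n :=
  le_singVal fun _ _ _ => norm_nonneg _

lemma singVal_antitone (x : H →L[ℂ] H) : Antitone (singVal x) :=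
  fun _ _ hmn => le_singVal fun F hF hrk => singVal_le F hF (hrk.trans hmn)

lemma singVal_eq_zero_of_range_le {x : H →L[ℂ] H} {n : ℕ} (U : Submodule ℂ H)
    [FiniteDimensional ℂ U] (hU : Module.finrank ℂ U ≤ n)
    (hx : LinearMap.range (x : H →ₗ[ℂ] H) ≤ U) : singVal x n = 0 :=
  le_antisymm (by simpa using singVal_le_of_range_le (x := x) x U hU hx) (singVal_nonneg x n)

lemma singVal_le_add_norm_sub (x y : H →L[ℂ] H) (n : ℕ) :
    singVal x n ≤ singVal y n + ‖x - y‖ :=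
  sub_le_iff_le_add.mp <| le_singVal fun F hF hrk => sub_le_iff_le_add.mpr <|
    (singVal_le F hF hrk).trans <| (norm_sub_le_norm_sub_add_norm_sub x y F).trans_eq (add_comm _ _)

lemma singVal_sub_add_le (x y : H →L[ℂ] H) (m n : ℕ) :
    singVal (x - y) (m + n) ≤ singVal x m + singVal y n := by
  have key : ∀ G : H →L[ℂ] H, FiniteDimensional ℂ (LinearMap.range (G : H →ₗ[ℂ] H)) →
      Module.finrank ℂ (LinearMap.range (G : H →ₗ[ℂ] H)) ≤ n →
      singVal (x - y) (m + n) - ‖y - G‖ ≤ singVal x m := fun G hG hGrk =>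
    le_singVal fun F hF hFrk => by
      have hle : LinearMap.range ((F - G : H →L[ℂ] H) : H →ₗ[ℂ] H) ≤
          LinearMap.range (F : H →ₗ[ℂ] H) ⊔ LinearMap.range (G : H →ₗ[ℂ] H) := by
        rintro _ ⟨h, rfl⟩
        exact Submodule.sub_mem_sup ⟨h, rfl⟩ ⟨h, rfl⟩
      have h1 := singVal_le_of_range_le (x := x - y) (F - G) _
        ((Submodule.finrank_add_le_finrank_add_finrank _ _).trans (add_le_add hFrk hGrk)) hle
      have h2 : ‖x - y - (F - G)‖ ≤ ‖x - F‖ + ‖y - G‖ := by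
        rw [sub_sub_sub_comm]
        exact norm_sub_le _ _
      linarith
  rw [← sub_le_iff_le_add']
  exact le_singVal fun G hG hGrk => by linarith [key G hG hGrk]

lemma singVal_mul_mul_le (a x p : H →L[ℂ] H) (ha : ‖a‖ ≤ 1) (hp : ‖p‖ ≤ 1) (n : ℕ) :
    singVal (a * x * p) n ≤ singVal x n :=
  le_singVal fun F hF hrk => by
    have hle : LinearMap.range ((a * F * p : H →L[ℂ] H) : H →ₗ[ℂ] H) ≤
        (LinearMap.range (F : H →ₗ[ℂ] H)).map (a : H →ₗ[ℂ] H) := by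
      rintro _ ⟨h, rfl⟩
      exact ⟨F (p h), ⟨p h, rfl⟩, rfl⟩
    calc singVal (a * x * p) n ≤ ‖a * x * p - a * F * p‖ :=
          singVal_le_of_range_le _ _ ((Submodule.finrank_map_le _ _).trans hrk) hle
      _ = ‖a * (x - F) * p‖ := by noncomm_ring
      _ ≤ ‖a‖ * ‖x - F‖ * ‖p‖ := norm_mul₃_le
      _ ≤ 1 * ‖x - F‖ * 1 := by gcongr
      _ = ‖x - F‖ := by ring

lemma BanachSymmSeqSpace.singVal_sub_mem (S : BanachSymmSeqSpace) {x y : H →L[ℂ] H}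
    (hx : singVal x ∈ S.carrier) (hy : singVal y ∈ S.carrier) :
    singVal (x - y) ∈ S.carrier := by
  set h := singVal x + singVal y
  have hh : Antitone h := (singVal_antitone x).add (singVal_antitone y)
  have hh0 : 0 ≤ h := add_nonneg (singVal_nonneg x) (singVal_nonneg y)
  refine (S.mem_and_nrm_le_of_le (S.comp_div_two_mem (S.add_mem _ hx _ hy) hh hh0)
    (singVal_antitone _) (singVal_nonneg _) (fun i j hij => hh (Nat.div_le_div_right hij))
    (fun n => hh0 (n / 2)) fun n => ?_).1
  calc singVal (x - y) n ≤ singVal (x - y) (n / 2 + n / 2) := singVal_antitone _ (by omega)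
    _ ≤ h (n / 2) := singVal_sub_add_le x y _ _

end SingularValues

theorem IsCompactOperator.tendsto_comp_of_tendsto_apply {𝕜 E F G ι : Type*} [RCLike 𝕜]
    [NormedAddCommGroup E] [NormedSpace 𝕜 E] [NormedAddCommGroup F] [NormedSpace 𝕜 F]
    [NormedAddCommGroup G] [NormedSpace 𝕜 G] {l : Filter ι} {T : E →L[𝕜] F}
    (hT : IsCompactOperator T) {P : ι → F →L[𝕜] G} {Q : F →L[𝕜] G} {C : NNReal}
    (hP : ∀ i, ‖P i‖ ≤ C) (hPQ : ∀ y, Tendsto (fun i => P i y) l (𝓝 (Q y))) :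
    Tendsto (fun i => (P i).comp T) l (𝓝 (Q.comp T)) := by
  set K := closure (T '' Metric.closedBall 0 1)
  have hunif : TendstoUniformlyOn (fun i => ⇑(P i)) Q l K := by
    have heq : EquicontinuousOn (fun i => ⇑(P i)) K :=
      (LipschitzWith.uniformEquicontinuous _ C fun i =>
        (P i).lipschitzWith_of_opNorm_le (hP i)).equicontinuous.equicontinuousOn K
    have h := (EquicontinuousOn.tendsto_uniformOnFun_iff_pi' (𝔖 := {K})
      (by simpa using hT.isCompact_closure_image_closedBall 1) (by simpa using heq) l Q).mpr
      (tendsto_pi_nhds.mpr fun y => hPQ y)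
    exact UniformOnFun.tendsto_iff_tendstoUniformlyOn.mp h K rfl
  rw [Metric.tendstoUniformlyOn_iff] at hunif
  refine Metric.tendsto_nhds.mpr fun ε hε => (hunif (ε / 2) (half_pos hε)).mono fun i hi => ?_
  rw [dist_eq_norm]
  refine ((P i).comp T - Q.comp T).opNorm_le_of_unit_norm (half_pos hε).le (fun x hx => ?_)
    |>.trans_lt (half_lt_self hε)
  have hTx : T x ∈ K := subset_closure ⟨x, by simp [hx], rfl⟩
  simpa [dist_eq_norm, norm_sub_rev] using (hi (T x) hTx).le

theorem IsStarProjection.norm_sub_mul_sq_le {A : Type*} [NormedRing A] [StarRing A] [CStarRing A]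
    {p : A} (hp : IsStarProjection p) (z : A) :
    ‖z - z * p‖ ^ 2 ≤ ‖star z * z - p * (star z * z)‖ := by
  have hq := hp.one_sub
  calc ‖z - z * p‖ ^ 2 = ‖star (z * (1 - p)) * (z * (1 - p))‖ := by
        rw [CStarRing.norm_star_mul_self, mul_sub, mul_one, sq]
    _ = ‖(1 - p) * (star z * z * (1 - p))‖ := by
        rw [star_mul, hq.isSelfAdjoint.star_eq]
        noncomm_ring
    _ ≤ ‖1 - p‖ * ‖star z * z * (1 - p)‖ := norm_mul_le _ _
    _ ≤ ‖star z * z * (1 - p)‖ :=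
        mul_le_of_le_one_left (norm_nonneg _) (IsStarProjection.norm_le _ hq)
    _ = ‖star z * z - p * (star z * z)‖ := by
        rw [← norm_star, star_mul, hq.isSelfAdjoint.star_eq, star_mul, star_star]
        noncomm_ring

section PartialProjection

variable {H : Type*} [NormedAddCommGroup H] [InnerProductSpace ℂ H] (b : HilbertBasis ℕ ℂ H)

open InnerProductSpace (rankOne)

noncomputable def partialProj (m : ℕ) : H →L[ℂ] H :=
  ∑ j ∈ Finset.range m, rankOne ℂ (b j) (b j)

lemma partialProj_apply (m : ℕ) (h : H) :
    partialProj b m h = ∑ j ∈ Finset.range m, ⟪b j, h⟫_ℂ • b j := by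
  simp [partialProj]

lemma isStarProjection_partialProj [CompleteSpace H] (m : ℕ) :
    IsStarProjection (partialProj b m) where
  isIdempotentElem := by
    ext h
    change partialProj b m (partialProj b m h) = _
    rw [partialProj_apply b m (partialProj b m h), partialProj_apply]
    exact Finset.sum_congr rfl fun j hj => by
      rw [b.orthonormal.inner_right_sum (fun i => ⟪b i, h⟫_ℂ) hj]
  isSelfAdjoint := isSelfAdjoint_sum _ fun j _ =>
    (InnerProductSpace.isStarProjection_rankOne_self (b.orthonormal.1 j)).isSelfAdjoint

lemma tendsto_partialProj_apply (y : H) :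
    Tendsto (fun m => partialProj b m y) atTop (𝓝 y) := by
  simpa [partialProj_apply, b.repr_apply_apply] using (b.hasSum_repr y).tendsto_sum_nat

lemma partialProj_mul_mul_partialProj (w : H →L[ℂ] H) (m : ℕ) :
    partialProj b m * w * partialProj b m =
      ∑ i ∈ Finset.range m, ∑ j ∈ Finset.range m, ⟪b i, w (b j)⟫_ℂ • rankOne ℂ (b i) (b j) := by
  ext h
  simp only [mul_apply_eq_comp, partialProj_apply, map_sum, map_smul, Finset.smul_sum, smul_smul,
    sum_apply, smul_apply,
    InnerProductSpace.rankOne_apply]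
  rw [Finset.sum_comm]
  exact Finset.sum_congr rfl fun i _ => Finset.sum_congr rfl fun j _ => by rw [mul_comm]

lemma tendsto_partialProj_mul_mul_partialProj [CompleteSpace H] {z : H →L[ℂ] H}
    (hz : IsCompactOperator z) :
    Tendsto (fun m => partialProj b m * z * partialProj b m) atTop (𝓝 z) := by
  set P := partialProj b
  have hP : ∀ m, ‖P m‖ ≤ (1 : NNReal) := fun m =>
    by simpa using IsStarProjection.norm_le _ (isStarProjection_partialProj b m)
  have hleft : ∀ {w : H →L[ℂ] H}, IsCompactOperator w → Tendsto (fun m => P m * w) atTop (𝓝 w) :=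
    fun hw => by
      simpa [ContinuousLinearMap.mul_def] using
        hw.tendsto_comp_of_tendsto_apply (Q := .id ℂ H) hP (tendsto_partialProj_apply b)
  have hz' : IsCompactOperator (star z * z) := hz.clm_comp (star z)
  -- `P m` converges only strongly, so `z * P m → z` is reached through `star z * z`.
  have hright : Tendsto (fun m => ‖z * P m - z‖) atTop (𝓝 0) := by
    have h := (tendsto_iff_norm_sub_tendsto_zero.mp (hleft hz')).sqrt
    rw [Real.sqrt_zero] at h
    refine squeeze_zero (fun _ => norm_nonneg _) (fun m => ?_) h
    rw [norm_sub_rev, norm_sub_rev (P m * _)]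
    exact Real.le_sqrt_of_sq_le ((isStarProjection_partialProj b m).norm_sub_mul_sq_le z)
  refine tendsto_iff_norm_sub_tendsto_zero.mpr (squeeze_zero (fun _ => norm_nonneg _) (fun m => ?_)
    (by simpa using hright.add (tendsto_iff_norm_sub_tendsto_zero.mp (hleft hz))))
  calc ‖P m * z * P m - z‖ = ‖P m * (z * P m - z) + (P m * z - z)‖ := by noncomm_ring
    _ ≤ ‖P m‖ * ‖z * P m - z‖ + ‖P m * z - z‖ := by
        grw [norm_add_le, norm_mul_le]
    _ ≤ ‖z * P m - z‖ + ‖P m * z - z‖ := by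
        gcongr
        exact mul_le_of_le_one_left (norm_nonneg _) (by simpa using hP m)

end PartialProjection

section WeakTopology

variable {H : Type*} [NormedAddCommGroup H] [InnerProductSpace ℂ H]
  (S : BanachSymmSeqSpace) (b : HilbertBasis ℕ ℂ H)

open InnerProductSpace (rankOne)

lemma rankOne_mem_KDual (u v : H) : rankOne ℂ u v ∈ KDual (H := H) S := by
  intro x hx
  have hrange : LinearMap.range ((x * rankOne ℂ u v : H →L[ℂ] H) : H →ₗ[ℂ] H) ≤ ℂ ∙ x u := by
    rintro _ ⟨h, rfl⟩
    exact Submodule.mem_span_singleton.mpr ⟨⟪v, h⟫_ℂ, by simp⟩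
  refine ⟨hx.1.comp_clm _, summable_of_ne_finset_zero (s := {0}) fun n hn => ?_⟩
  exact singVal_eq_zero_of_range_le _ ((finrank_span_le_card _).trans (by simp at hn ⊢; omega))
    hrange

lemma traceB_mul_rankOne (x : H →L[ℂ] H) (u v : H) :
    traceB b (x * rankOne ℂ u v) = ⟪v, x u⟫_ℂ := by
  simp only [traceB, mul_apply_eq_comp, InnerProductSpace.rankOne_apply,
    map_smul, inner_smul_right]
  exact b.tsum_inner_mul_inner v (x u)

lemma continuous_inner_apply_sigmaTop (u v : H) :
    @Continuous _ _ (sigmaTop S b) _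
      fun x : {x : H →L[ℂ] H // x ∈ CE (H := H) S} => ⟪v, x.1 u⟫_ℂ := by
  simp_rw [← traceB_mul_rankOne b]
  exact continuous_iInf_dom (i := ⟨rankOne ℂ u v, rankOne_mem_KDual S u v⟩) continuous_induced_dom

lemma continuous_partialProj_mul_mul_partialProj (m : ℕ) :
    @Continuous _ _ (sigmaTop S b) _ fun x : {x : H →L[ℂ] H // x ∈ CE (H := H) S} =>
      partialProj b m * x.1 * partialProj b m := by
  let _ := sigmaTop S b
  simp_rw [partialProj_mul_mul_partialProj]
  exact continuous_finsetSum _ fun i _ => continuous_finsetSum _ fun j _ =>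
    (continuous_inner_apply_sigmaTop S b (b j) (b i)).smul continuous_const

lemma exists_singVal_le_of_mem_closure [CompleteSpace H]
    {c x : {x : H →L[ℂ] H // x ∈ CE (H := H) S}} {ε : ℝ}
    (hx : x ∈ @closure _ (sigmaTop S b) {y | CEnorm S (y.1 - c.1) ≤ ε}) {δ : ℝ} (hδ : 0 < δ) :
    ∃ y : {x : H →L[ℂ] H // x ∈ CE (H := H) S}, CEnorm S (y.1 - c.1) ≤ ε ∧
      ∀ n, singVal (x.1 - c.1) n ≤ singVal (y.1 - c.1) n + δ := by
  let _ := sigmaTop S b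
  set z := x.1 - c.1
  obtain ⟨m, hm⟩ := ((tendsto_partialProj_mul_mul_partialProj b (x.2.1.sub c.2.1)).eventually
    (Metric.closedBall_mem_nhds z (half_pos hδ))).exists
  set P := partialProj b m
  have hopen : IsOpen {y : {x : H →L[ℂ] H // x ∈ CE (H := H) S} |
      ‖P * y.1 * P - P * x.1 * P‖ < δ / 2} :=
    isOpen_lt ((continuous_partialProj_mul_mul_partialProj S b m).sub continuous_const).norm
      continuous_const
  obtain ⟨y, hyx, hy⟩ := mem_closure_iff.mp hx _ hopen (by simpa using half_pos hδ)
  refine ⟨y, hy, fun n => ?_⟩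
  have hP : ‖P‖ ≤ 1 := IsStarProjection.norm_le _ (isStarProjection_partialProj b m)
  have hPzP : ‖P * z * P - P * (y.1 - c.1) * P‖ < δ / 2 := by
    have e : P * z * P - P * (y.1 - c.1) * P = -(P * y.1 * P - P * x.1 * P) := by
      simp only [z]
      noncomm_ring
    rwa [e, norm_neg]
  calc singVal z n ≤ singVal (P * z * P) n + ‖z - P * z * P‖ := singVal_le_add_norm_sub _ _ n
    _ ≤ singVal (P * (y.1 - c.1) * P) n + ‖P * z * P - P * (y.1 - c.1) * P‖ +
          ‖z - P * z * P‖ := by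
        gcongr
        exact singVal_le_add_norm_sub _ _ n
    _ ≤ singVal (y.1 - c.1) n + δ / 2 + δ / 2 := by
        gcongr
        · exact singVal_mul_mul_le _ _ _ hP hP n
        · rw [← dist_eq_norm']
          exact hm
    _ = singVal (y.1 - c.1) n + δ := by ring

lemma isClosed_sigmaTop_closedBall [CompleteSpace H] (hF : S.Fatou)
    (c : {x : H →L[ℂ] H // x ∈ CE (H := H) S}) (ε : ℝ) :
    @IsClosed _ (sigmaTop S b)
      {y : {x : H →L[ℂ] H // x ∈ CE (H := H) S} | CEnorm S (y.1 - c.1) ≤ ε} := by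
  let _ := sigmaTop S b
  refine isClosed_of_closure_subset fun x hx => ?_
  refine S.nrm_le_of_forall_le_add hF (singVal_antitone _) (singVal_nonneg _) fun δ hδ => ?_
  obtain ⟨y, hy, hle⟩ := exists_singVal_le_of_mem_closure S b hx hδ
  exact ⟨_, S.singVal_sub_mem y.2.2 c.2.2, singVal_antitone _, singVal_nonneg _, hy, hle⟩

end WeakTopology

theorem ball_topology_coarser_than_weak_general
    {H : Type*} [NormedAddCommGroup H] [InnerProductSpace ℂ H] [CompleteSpace H]
    (S : BanachSymmSeqSpace) (hF : S.Fatou)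
    (b : HilbertBasis ℕ ℂ H) :
    (∀ (c : {x : H →L[ℂ] H // x ∈ CE (H := H) S}) (ε : ℝ), 0 < ε →
      @IsClosed _ (sigmaTop S b)
        {y : {x : H →L[ℂ] H // x ∈ CE (H := H) S} | CEnorm S (y.1 - c.1) ≤ ε}) ∧
    (∀ s : Set {x : H →L[ℂ] H // x ∈ CE (H := H) S},
      (ballTop S).IsOpen s → (sigmaTop S b).IsOpen s) := by
  have hclosed := isClosed_sigmaTop_closedBall S b hF
  refine ⟨fun c ε _ => hclosed c ε, fun s hs => ?_⟩
  have hle : sigmaTop S b ≤ ballTop S := le_generateFrom <| by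
    rintro _ ⟨c, ε, -, rfl⟩
    exact (hclosed c ε).isOpen_compl
  exact hle s hs

/-- If `E` has the Fatou property then every closed norm ball of `C_E` is
closed in the weak topology `σ(C_E, C_E^×)`; consequently the ball topology `b_{C_E}` is
coarser than `σ(C_E, C_E^×)` (every `b_{C_E}`-open set is `σ(C_E, C_E^×)`-open). -/
theorem ball_topology_coarser_than_weak
    {H : Type*} [NormedAddCommGroup H] [InnerProductSpace ℂ H] [CompleteSpace H]
    [TopologicalSpace.SeparableSpace H] (hinf : ¬ FiniteDimensional ℂ H)
    (S : BanachSymmSeqSpace) (hc0 : S.SubsetC0) (hF : S.Fatou)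
    (b : HilbertBasis ℕ ℂ H) :
    (∀ (c : {x : H →L[ℂ] H // x ∈ CE (H := H) S}) (ε : ℝ), 0 < ε →
      @IsClosed _ (sigmaTop S b)
        {y : {x : H →L[ℂ] H // x ∈ CE (H := H) S} | CEnorm S (y.1 - c.1) ≤ ε}) ∧
    (∀ s : Set {x : H →L[ℂ] H // x ∈ CE (H := H) S},
      (ballTop S).IsOpen s → (sigmaTop S b).IsOpen s) :=
  ball_topology_coarser_than_weak_general S hF b
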